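/- arXiv:1810.04598 — 3 statements merged into one kernel-verified Lean document; each statement's English description precedes it below -/
import Mathlib

section
/- Let w ∈ M_m(ℂ) have positive definite imaginary part Im w = (w − w*)/(2i), and let x₁,…,x_k be self-adjoint elements of a unital C*-algebra A with self-adjoint coefficient matrices α₁,…,α_k ∈ M_m(ℂ). Then w ⊗ 1_A − Σⱼ αⱼ ⊗ xⱼ is invertible in M_m(A) and ‖(w ⊗ 1_A − Σⱼ αⱼ ⊗ xⱼ)⁻¹‖ ≤ ‖(Im w)⁻¹‖. -/
open Matrix
open scoped Matrix.Norms.L2Operator ComplexOrder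

/-!
Write `t = a + i b` with `a = ℜ t`, `b = ℑ t` self-adjoint and `b` strictly positive. Then
`t b⁻¹ t* = t* b⁻¹ t = a b⁻¹ a + b ≥ b`, so both products are invertible and `t` has a left and a
right inverse. For `s = t⁻¹` one has `s b s* = -ℑ s`; as `b ≥ ‖b⁻¹‖⁻¹`, this gives
`‖b⁻¹‖⁻¹ ‖s‖² ≤ ‖ℑ s‖ ≤ ‖s‖`, i.e. `‖s‖ ≤ ‖b⁻¹‖`.

For `t = w ⊗ 1 - ∑ⱼ αⱼ ⊗ xⱼ` the sum is self-adjoint, so `ℑ t` is the image of `Im w` under a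
unital *-homomorphism; *-homomorphisms of C*-algebras are contractive, whence the bound by
`‖(Im w)⁻¹‖`.
-/

open ComplexStarModule

section StarModule

variable {M : Type*} [AddCommGroup M] [Module ℂ M] [StarAddMonoid M] [StarModule ℂ M]

lemma coe_imaginaryPart_eq_smul_sub_star (a : M) :
    (ℑ a : M) = (2 * Complex.I)⁻¹ • (a - star a) := by
  rw [imaginaryPart_apply_coe, ← Complex.coe_smul, smul_smul]
  congr 1
  field_simp
  simp

lemma star_eq_realPart_sub_I_smul_imaginaryPart (a : M) :
    star a = (ℜ a : M) - Complex.I • (ℑ a : M) := by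
  conv_lhs => rw [← realPart_add_I_smul_imaginaryPart a]
  simp [star_smul, (ℜ a).2.star_eq, (ℑ a).2.star_eq, sub_eq_add_neg]

end StarModule

section ComplexAlgebra

variable {R : Type*} [Ring R] [Algebra ℂ R]

lemma add_I_smul_mul_mul_sub_I_smul {a b u : R} (hbu : b * u = 1) (hub : u * b = 1) :
    (a + Complex.I • b) * u * (a - Complex.I • b) = a * u * a + b := by
  have haub : a * u * b = a := by rw [mul_assoc, hub, mul_one]
  simp only [add_mul, mul_sub, smul_mul_assoc, mul_smul_comm, hbu, haub, one_mul, smul_add,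
    smul_smul, Complex.I_mul_I, neg_one_smul]
  abel

lemma sub_I_smul_mul_mul_add_I_smul {a b u : R} (hbu : b * u = 1) (hub : u * b = 1) :
    (a - Complex.I • b) * u * (a + Complex.I • b) = a * u * a + b := by
  have haub : a * u * b = a := by rw [mul_assoc, hub, mul_one]
  simp only [sub_mul, mul_add, smul_mul_assoc, mul_smul_comm, hbu, haub, one_mul, smul_sub,
    smul_smul, Complex.I_mul_I, neg_one_smul]
  abel

variable [StarRing R] [StarModule ℂ R]

lemma mul_ringInverse_imaginaryPart_mul_star {t : R} (h : IsUnit (ℑ t : R)) :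
    t * Ring.inverse (ℑ t : R) * star t = ℜ t * Ring.inverse (ℑ t : R) * ℜ t + ℑ t := by
  have := add_I_smul_mul_mul_sub_I_smul (a := (ℜ t : R)) (Ring.mul_inverse_cancel _ h)
    (Ring.inverse_mul_cancel _ h)
  rwa [realPart_add_I_smul_imaginaryPart, ← star_eq_realPart_sub_I_smul_imaginaryPart] at this

lemma star_mul_ringInverse_imaginaryPart_mul {t : R} (h : IsUnit (ℑ t : R)) :
    star t * Ring.inverse (ℑ t : R) * t = ℜ t * Ring.inverse (ℑ t : R) * ℜ t + ℑ t := by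
  have := sub_I_smul_mul_mul_add_I_smul (a := (ℜ t : R)) (Ring.mul_inverse_cancel _ h)
    (Ring.inverse_mul_cancel _ h)
  rwa [realPart_add_I_smul_imaginaryPart, ← star_eq_realPart_sub_I_smul_imaginaryPart] at this

lemma imaginaryPart_ringInverse {t : R} (h : IsUnit t) :
    (ℑ (Ring.inverse t) : R) = -(Ring.inverse t * ℑ t * star (Ring.inverse t)) := by
  have hl : Ring.inverse t * t = 1 := Ring.inverse_mul_cancel _ h
  have hr : star t * star (Ring.inverse t) = 1 := by rw [← star_mul, hl, star_one]
  simp only [imaginaryPart_apply_coe, mul_smul_comm, smul_mul_assoc, mul_sub, sub_mul, hl,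
    one_mul, mul_assoc, hr, mul_one, ← smul_neg, neg_sub]

end ComplexAlgebra

lemma map_ringInverse_of_isUnit {M N F : Type*} [MonoidWithZero M] [MonoidWithZero N]
    [FunLike F M N] [MonoidHomClass F M N] (f : F) {a : M} (ha : IsUnit a) :
    f (Ring.inverse a) = Ring.inverse (f a) := by
  rw [← one_mul (Ring.inverse (f a)), Ring.eq_mul_inverse_iff_mul_eq _ _ _ (ha.map f), ← map_mul,
    Ring.inverse_mul_cancel _ ha, map_one]

lemma isUnit_of_isUnit_mul_of_isUnit_mul {M : Type*} [Monoid M] {a b c : M}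
    (hr : IsUnit (a * b)) (hl : IsUnit (c * a)) : IsUnit a := by
  obtain ⟨u, hu⟩ := hr
  obtain ⟨v, hv⟩ := hl
  have h1 : a * (b * ↑u⁻¹) = 1 := by rw [← mul_assoc, ← hu, u.mul_inv]
  have h2 : (↑v⁻¹ * c) * a = 1 := by rw [mul_assoc, ← hv, v.inv_mul]
  exact isUnit_iff_exists.2 ⟨_, h1, by rwa [← left_inv_eq_right_inv h2 h1]⟩

lemma IsStrictlyPositive.map {R S F : Type*} [Semiring R] [PartialOrder R] [StarRing R]
    [StarOrderedRing R] [Semiring S] [PartialOrder S] [StarRing S] [StarOrderedRing S]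
    [FunLike F R S] [RingHomClass F R S] [NonUnitalStarRingHomClass F R S] (f : F) {a : R}
    (ha : IsStrictlyPositive a) : IsStrictlyPositive (f a) :=
  (ha.isUnit.map f).isStrictlyPositive (map_nonneg f ha.nonneg)

open scoped MatrixOrder in
lemma Matrix.PosDef.isStrictlyPositive_map {n 𝕜 C F : Type*} [Fintype n] [DecidableEq n]
    [RCLike 𝕜] [Semiring C] [PartialOrder C] [StarRing C] [StarOrderedRing C]
    [FunLike F (Matrix n n 𝕜) C] [RingHomClass F (Matrix n n 𝕜) C]
    [NonUnitalStarRingHomClass F (Matrix n n 𝕜) C] {S : Matrix n n 𝕜} (hS : S.PosDef) (f : F) :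
    IsStrictlyPositive (f S) :=
  hS.isStrictlyPositive.map f

section CStarAlgebra

variable {C : Type*} [CStarAlgebra C] [PartialOrder C] [StarOrderedRing C]

lemma IsStrictlyPositive.algebraMap_inv_norm_ringInverse_le {b : C}
    (hb : IsStrictlyPositive b) : algebraMap ℝ C ‖Ring.inverse b‖⁻¹ ≤ b := by
  nontriviality C
  have hpos : ‖Ring.inverse b‖ ≠ 0 := norm_ne_zero_iff.2 hb.isUnit.ringInverse.ne_zero
  have hle : Ring.inverse b ≤ algebraMap ℝ C ‖Ring.inverse b‖ :=
    IsSelfAdjoint.le_algebraMap_norm_self hb.ringInverse.isSelfAdjoint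
  have := CStarAlgebra.ringInverse_le_ringInverse hle hb.ringInverse
  rwa [Ring.inverse_inverse hb.isUnit, ← map_ringInverse_of_isUnit _ (Ne.isUnit hpos),
    Ring.inverse_eq_inv] at this

lemma isUnit_of_isStrictlyPositive_imaginaryPart {t : C} (h : IsStrictlyPositive (ℑ t : C)) :
    IsUnit t := by
  have hd : IsUnit ((ℜ t : C) * Ring.inverse (ℑ t : C) * ℜ t + ℑ t) :=
    (IsStrictlyPositive.nonneg_add ((ℜ t).2.conjugate_nonneg h.ringInverse.nonneg) h).isUnit
  refine isUnit_of_isUnit_mul_of_isUnit_mul (b := Ring.inverse (ℑ t : C) * star t)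
    (c := star t * Ring.inverse (ℑ t : C)) ?_ ?_
  · rwa [← mul_assoc, mul_ringInverse_imaginaryPart_mul_star h.isUnit]
  · rwa [star_mul_ringInverse_imaginaryPart_mul h.isUnit]

lemma norm_ringInverse_le_of_isStrictlyPositive_imaginaryPart {t : C}
    (h : IsStrictlyPositive (ℑ t : C)) :
    ‖Ring.inverse t‖ ≤ ‖Ring.inverse (ℑ t : C)‖ := by
  set s := Ring.inverse t
  set N := ‖Ring.inverse (ℑ t : C)‖
  have hconj : N⁻¹ • (s * star s) ≤ -(ℑ s : C) := by
    rw [imaginaryPart_ringInverse (isUnit_of_isStrictlyPositive_imaginaryPart h), neg_neg,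
      Algebra.smul_def, ← mul_assoc, Algebra.commutes]
    exact star_right_conjugate_le_conjugate h.algebraMap_inv_norm_ringInverse_le s
  have hnorm : N⁻¹ * (‖s‖ * ‖s‖) ≤ ‖s‖ := calc
    N⁻¹ * (‖s‖ * ‖s‖) = ‖N⁻¹ • (s * star s)‖ := by
      rw [norm_smul, CStarRing.norm_self_mul_star, Real.norm_of_nonneg (by positivity)]
    _ ≤ ‖(ℑ s : C)‖ := by
      rw [← norm_neg (ℑ s : C)]
      exact CStarAlgebra.norm_le_norm_of_nonneg_of_le
        (smul_nonneg (by positivity) (mul_star_self_nonneg s)) hconj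
    _ ≤ ‖s‖ := imaginaryPart.norm_le s
  rcases (norm_nonneg s).eq_or_lt with hs | hs
  · rw [← hs]
    positivity
  have : Nontrivial C := ⟨⟨s, 0, norm_pos_iff.1 hs⟩⟩
  have hN : 0 < N := norm_pos_iff.2 h.isUnit.ringInverse.ne_zero
  rw [inv_mul_le_iff₀ hN] at hnorm
  exact le_of_mul_le_mul_right hnorm hs

end CStarAlgebra

section MapMatrix

variable {n R α β : Type*} [Fintype n] [DecidableEq n] [CommSemiring R]
  [Semiring α] [StarRing α] [Algebra R α] [Semiring β] [StarRing β] [Algebra R β]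

def StarAlgHom.mapMatrix (f : α →⋆ₐ[R] β) : Matrix n n α →⋆ₐ[R] Matrix n n β :=
  { f.toAlgHom.mapMatrix with
    map_star' := fun M => M.conjTranspose_map f (map_star f) }

@[simp]
lemma StarAlgHom.mapMatrix_apply (f : α →⋆ₐ[R] β) (M : Matrix n n α) :
    f.mapMatrix M = M.map f :=
  rfl

end MapMatrix

section Matrix

variable {n A : Type*} [Ring A] [StarRing A] [Algebra ℂ A] [StarModule ℂ A]

lemma Matrix.IsHermitian.isSelfAdjoint_map_smul {α : Matrix n n ℂ} (hα : α.IsHermitian) {x : A}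
    (hx : IsSelfAdjoint x) : IsSelfAdjoint (α.map (· • x)) := by
  ext i j
  simp [Matrix.star_apply, star_smul, hx.star_eq, ← hα.apply i j]

lemma imaginaryPart_map_algebraMap_sub [Fintype n] [DecidableEq n] (w : Matrix n n ℂ)
    {X : Matrix n n A} (hX : IsSelfAdjoint X) :
    (ℑ (w.map (algebraMap ℂ A) - X) : Matrix n n A) =
      (StarAlgHom.ofId ℂ A).mapMatrix (ℑ w : Matrix n n ℂ) := by
  rw [map_sub, hX.imaginaryPart, sub_zero, map_imaginaryPart, StarAlgHom.mapMatrix_apply]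
  rfl

end Matrix

theorem norm_inv_resolvent_le_general {A : Type*} [NormedRing A] [StarRing A] [CStarRing A]
    [CompleteSpace A] [NormedAlgebra ℂ A] [StarModule ℂ A]
    (m k : ℕ)
    (w : Matrix (Fin m) (Fin m) ℂ)
    (hw : (((2 * Complex.I)⁻¹ : ℂ) • (w - wᴴ)).PosDef)
    (x : Fin k → A) (hx : ∀ j, IsSelfAdjoint (x j))
    (α : Fin k → Matrix (Fin m) (Fin m) ℂ) (hα : ∀ j, (α j).IsHermitian)
    {B : Type*} [NormedRing B] [StarRing B] [CStarRing B] [CompleteSpace B]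
    [NormedAlgebra ℂ B] [StarModule ℂ B]
    (π : Matrix (Fin m) (Fin m) A →⋆ₐ[ℂ] B) :
    IsUnit (w.map (algebraMap ℂ A) - ∑ j, (α j).map (fun c => c • x j)) ∧
      ‖Ring.inverse (π (w.map (algebraMap ℂ A) - ∑ j, (α j).map (fun c => c • x j)))‖ ≤
        ‖((((2 * Complex.I)⁻¹ : ℂ) • (w - wᴴ))⁻¹ : Matrix (Fin m) (Fin m) ℂ)‖ := by
  let _ : CStarAlgebra A := {}
  let _ : PartialOrder A := CStarAlgebra.spectralOrder A
  let _ : StarOrderedRing A := CStarAlgebra.spectralOrderedRing A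
  let _ : CStarAlgebra B := {}
  let _ : PartialOrder B := CStarAlgebra.spectralOrder B
  let _ : StarOrderedRing B := CStarAlgebra.spectralOrderedRing B
  rw [← Matrix.star_eq_conjTranspose, ← coe_imaginaryPart_eq_smul_sub_star] at hw ⊢
  set ι := (StarAlgHom.ofId ℂ A).mapMatrix (n := Fin m)
  have hIm := imaginaryPart_map_algebraMap_sub w
    (isSelfAdjoint_sum Finset.univ fun j _ => (hα j).isSelfAdjoint_map_smul (hx j))
  set T := w.map (algebraMap ℂ A) - ∑ j, (α j).map (fun c => c • x j)
  constructor
  -- invertibility is decided in `CStarMatrix`, the C*-algebra structure on `M_m(A)`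
  · let e := CStarMatrix.ofMatrixStarAlgEquiv (n := Fin m) (A := A)
    have he : IsStrictlyPositive (ℑ (e T) : CStarMatrix (Fin m) (Fin m) A) := by
      rw [← map_imaginaryPart, hIm]
      exact hw.isStrictlyPositive_map (e.toStarAlgHom.comp ι)
    simpa using (isUnit_of_isStrictlyPositive_imaginaryPart he).map e.symm
  · have hB : (ℑ (π T) : B) = π.comp ι (ℑ w) := by
      rw [← map_imaginaryPart, hIm]
      rfl
    calc ‖Ring.inverse (π T)‖ ≤ ‖Ring.inverse (ℑ (π T) : B)‖ :=
          norm_ringInverse_le_of_isStrictlyPositive_imaginaryPart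
            (hB ▸ hw.isStrictlyPositive_map (π.comp ι))
      _ = ‖π.comp ι (Ring.inverse (ℑ w))‖ := by
          rw [hB, map_ringInverse_of_isUnit _ hw.isUnit]
      _ ≤ ‖(ℑ w : Matrix (Fin m) (Fin m) ℂ)⁻¹‖ := by
          rw [Matrix.nonsing_inv_eq_ringInverse]
          exact NonUnitalStarAlgHom.norm_apply_le (π.comp ι) _

/-- If `Im w := (w - w*)/(2i)` is positive definite, `x₁,…,x_k` are self-adjoint in a unital
C*-algebra `A` and `α₁,…,α_k` are Hermitian matrices, then `T := w ⊗ 1 - ∑ⱼ αⱼ ⊗ xⱼ` is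
invertible in `M_m(A)` and `‖T⁻¹‖ ≤ ‖(Im w)⁻¹‖`.  Since the C*-norm on `M_m(A)` is unique,
it is realized here through an arbitrary injective unital *-embedding `π` of `M_m(A)` into
a unital C*-algebra `B`. -/
theorem norm_inv_resolvent_le {A : Type*} [NormedRing A] [StarRing A] [CStarRing A]
    [CompleteSpace A] [NormedAlgebra ℂ A] [StarModule ℂ A]
    (m k : ℕ)
    (w : Matrix (Fin m) (Fin m) ℂ)
    (hw : (((2 * Complex.I)⁻¹ : ℂ) • (w - wᴴ)).PosDef)
    (x : Fin k → A) (hx : ∀ j, IsSelfAdjoint (x j))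
    (α : Fin k → Matrix (Fin m) (Fin m) ℂ) (hα : ∀ j, (α j).IsHermitian)
    {B : Type*} [NormedRing B] [StarRing B] [CStarRing B] [CompleteSpace B]
    [NormedAlgebra ℂ B] [StarModule ℂ B]
    (π : Matrix (Fin m) (Fin m) A →⋆ₐ[ℂ] B) (hπ : Function.Injective π) :
    IsUnit (w.map (algebraMap ℂ A) - ∑ j, (α j).map (fun c => c • x j)) ∧
      ‖Ring.inverse (π (w.map (algebraMap ℂ A) - ∑ j, (α j).map (fun c => c • x j)))‖ ≤
        ‖((((2 * Complex.I)⁻¹ : ℂ) • (w - wᴴ))⁻¹ : Matrix (Fin m) (Fin m) ℂ)‖ :=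
  norm_inv_resolvent_le_general m k w hw x hx α hα π
end

section
/- Fix θ ∈ ℝ \ {0} and let G be a solution of z G² − z G + 1 = 0 on ℂ \ [0,4]. The equation θ² G(t)² − (1 − G(t)) = 0 combined with t G(t)² − t G(t) + 1 = 0 has the real solutions t = ρ_θ^± := 2θ⁴ / (−(3θ²+1) ± √(4θ²+1)(θ²+1)), and at these points G(ρ_θ^±) = 1/2 + (−(θ²+1) ± √(4θ²+1))/(2θ²). -/
/-!
Completing the square in `θ² g² + g - 1 = 0` gives `(2θ²g + 1)² = 4θ² + 1`, so
`2θ²g + 1 = ±√(4θ²+1)`. The first equation says `t (g - g²) = 1`, and the second lets one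
write `g - g² = ((θ²+1) g - 1)/θ²`, which is linear in `g`; substituting the value of `g`
gives `t`.
-/

section Field

variable {K : Type*} [Field K]

theorem eq_inv_sub_sq_of_mul_sq_sub_mul_add_one_eq_zero {g t : K}
    (h : t * g ^ 2 - t * g + 1 = 0) : t = (g - g ^ 2)⁻¹ :=
  eq_inv_of_mul_eq_one_left (by linear_combination -h)

theorem two_mul_mul_eq_neg_one_add_or_sub {a g s : K} (hs : s ^ 2 = 4 * a + 1)
    (h : a * g ^ 2 = 1 - g) : 2 * a * g = -1 + s ∨ 2 * a * g = -1 - s := by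
  have hsq : (2 * a * g + 1) ^ 2 = s ^ 2 := by linear_combination 4 * a * h - hs
  rcases sq_eq_sq_iff_eq_or_eq_neg.mp hsq with h | h
  · exact Or.inl (by linear_combination h)
  · exact Or.inr (by linear_combination h)

theorem sub_sq_eq_of_mul_sq_eq_one_sub [NeZero (2 : K)] {a g e : K} (ha : a ≠ 0)
    (hg2 : a * g ^ 2 = 1 - g) (hg : 2 * a * g = -1 + e) :
    g - g ^ 2 = (-(3 * a + 1) + (a + 1) * e) / (2 * a ^ 2) := by
  rw [eq_div_iff (mul_ne_zero two_ne_zero (pow_ne_zero 2 ha))]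
  linear_combination (-2 * a) * hg2 + (a + 1) * hg

end Field

theorem outlier_values_general (θ : ℝ) (g t : ℂ)
    (h1 : t * g ^ 2 - t * g + 1 = 0)
    (h2 : (θ : ℂ) ^ 2 * g ^ 2 = 1 - g) :
    ∃ ε : ℝ, (ε = 1 ∨ ε = -1) ∧
      g = ((1 / 2 + (-(θ ^ 2 + 1) + ε * Real.sqrt (4 * θ ^ 2 + 1)) / (2 * θ ^ 2) : ℝ) : ℂ) ∧
      t = ((2 * θ ^ 4 /
        (-(3 * θ ^ 2 + 1) + ε * (θ ^ 2 + 1) * Real.sqrt (4 * θ ^ 2 + 1)) : ℝ) : ℂ) := by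
  have hθ : (θ : ℂ) ≠ 0 := by
    rintro hθ
    obtain rfl : g = 1 := by rw [hθ] at h2; linear_combination h2
    simp at h1
  set s : ℝ := Real.sqrt (4 * θ ^ 2 + 1)
  have hs : (s : ℂ) ^ 2 = 4 * (θ : ℂ) ^ 2 + 1 := by
    exact_mod_cast Real.sq_sqrt (by positivity : (0 : ℝ) ≤ 4 * θ ^ 2 + 1)
  obtain ⟨ε, hε, hg⟩ : ∃ ε : ℝ, (ε = 1 ∨ ε = -1) ∧ 2 * (θ : ℂ) ^ 2 * g = -1 + (ε * s : ℝ) := by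
    rcases two_mul_mul_eq_neg_one_add_or_sub hs h2 with hg | hg
    · exact ⟨1, Or.inl rfl, by push_cast; linear_combination hg⟩
    · exact ⟨-1, Or.inr rfl, by push_cast; linear_combination hg⟩
  refine ⟨ε, hε, ?_, ?_⟩
  · push_cast at hg ⊢
    field_simp
    linear_combination hg
  · rw [eq_inv_sub_sq_of_mul_sq_sub_mul_add_one_eq_zero h1,
      sub_sq_eq_of_mul_sq_eq_one_sub (pow_ne_zero 2 hθ) h2 hg]
    push_cast
    rw [inv_div]
    ring

/-- Algebraic determination of the outliers: if `t g² - t g + 1 = 0` and `θ² g² = 1 - g`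
with `θ ≠ 0`, then (with matched signs `ε = ±1`)
`g = 1/2 + (-(θ²+1) + ε√(4θ²+1))/(2θ²)` and
`t = 2θ⁴/(-(3θ²+1) + ε(θ²+1)√(4θ²+1))`. -/
theorem outlier_values (θ : ℝ) (hθ : θ ≠ 0) (g t : ℂ)
    (h1 : t * g ^ 2 - t * g + 1 = 0)
    (h2 : (θ : ℂ) ^ 2 * g ^ 2 = 1 - g) :
    ∃ ε : ℝ, (ε = 1 ∨ ε = -1) ∧
      g = ((1 / 2 + (-(θ ^ 2 + 1) + ε * Real.sqrt (4 * θ ^ 2 + 1)) / (2 * θ ^ 2) : ℝ) : ℂ) ∧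
      t = ((2 * θ ^ 4 /
        (-(3 * θ ^ 2 + 1) + ε * (θ ^ 2 + 1) * Real.sqrt (4 * θ ^ 2 + 1)) : ℝ) : ℂ) :=
  outlier_values_general θ g t h1 h2
end

section
/- Let f: ℝ → ℝ be Lipschitz with constant C_L. Then its extension to Hermitian n×n matrices by functional calculus is C_L-Lipschitz with respect to the Hilbert–Schmidt norm: for all Hermitian A, B, ‖f(A) − f(B)‖_HS ≤ C_L ‖A − B‖_HS, where ‖M‖_HS = (Tr M²)^{1/2} for Hermitian M. -/
/-! Write `A = U diag(a) U*`, `B = V diag(b) V*` and `W = U* V`. The matrix `U* (A - B) V` has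
entries `(aᵢ - bⱼ) Wᵢⱼ`, so by unitary invariance of the Hilbert–Schmidt norm
`‖A - B‖² = ∑ᵢⱼ (aᵢ - bⱼ)² |Wᵢⱼ|²`, and likewise
`‖f(A) - f(B)‖² = ∑ᵢⱼ (f aᵢ - f bⱼ)² |Wᵢⱼ|²` with the same weights.
The Lipschitz bound then holds term by term. -/

noncomputable def hermFun {n : ℕ} {A : Matrix (Fin n) (Fin n) ℂ} (hA : A.IsHermitian)
    (f : ℝ → ℝ) : Matrix (Fin n) (Fin n) ℂ :=
  (hA.eigenvectorUnitary : Matrix (Fin n) (Fin n) ℂ) *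
    Matrix.diagonal (fun i => (f (hA.eigenvalues i) : ℂ)) *
    star (hA.eigenvectorUnitary : Matrix (Fin n) (Fin n) ℂ)

open Matrix

namespace Matrix

variable {ι : Type*} [Fintype ι]

lemma re_trace_conjTranspose_mul_self {m : Type*} [Fintype m] (M : Matrix m ι ℂ) :
    (Mᴴ * M).trace.re = ∑ i, ∑ j, Complex.normSq (M i j) := by
  rw [Finset.sum_comm]
  simp [trace, mul_apply, Complex.re_sum, Complex.normSq_apply]

variable [DecidableEq ι]

lemma trace_star_mul_self_unitary_mul_mul {U V : Matrix ι ι ℂ}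
    (hU : U ∈ unitaryGroup ι ℂ) (hV : V ∈ unitaryGroup ι ℂ) (M : Matrix ι ι ℂ) :
    (star (U * M * star V) * (U * M * star V)).trace = (star M * M).trace := by
  have hUU : star U * U = 1 := mem_unitaryGroup_iff'.mp hU
  have hVV : star V * V = 1 := mem_unitaryGroup_iff'.mp hV
  calc (star (U * M * star V) * (U * M * star V)).trace
      = (V * (star M * (star U * U) * M) * star V).trace := by
        simp only [star_mul, star_star, Matrix.mul_assoc]
    _ = (star V * V * (star M * M)).trace := by
        rw [hUU, Matrix.mul_one, trace_mul_comm, Matrix.mul_assoc]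
    _ = (star M * M).trace := by rw [hVV, Matrix.one_mul]

lemma unitary_conj_diagonal_sub {U V : Matrix ι ι ℂ}
    (hU : U ∈ unitaryGroup ι ℂ) (hV : V ∈ unitaryGroup ι ℂ) (a b : ι → ℂ) :
    U * diagonal a * star U - V * diagonal b * star V
      = U * of (fun i j => (a i - b j) * (star U * V) i j) * star V := by
  have hUU : U * star U = 1 := mem_unitaryGroup_iff.mp hU
  have hVV : V * star V = 1 := mem_unitaryGroup_iff.mp hV
  have hmid : of (fun i j => (a i - b j) * (star U * V) i j)
      = diagonal a * (star U * V) - (star U * V) * diagonal b := by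
    ext i j; simp [sub_mul, mul_comm]
  rw [hmid, Matrix.mul_sub, Matrix.sub_mul]
  simp only [← Matrix.mul_assoc, hUU, Matrix.one_mul]
  simp only [Matrix.mul_assoc, hVV, Matrix.mul_one]

lemma re_trace_sq_unitary_conj_diagonal_sub {U V : Matrix ι ι ℂ}
    (hU : U ∈ unitaryGroup ι ℂ) (hV : V ∈ unitaryGroup ι ℂ) (a b : ι → ℝ) :
    ((U * diagonal (fun i => (a i : ℂ)) * star U - V * diagonal (fun i => (b i : ℂ)) * star V) *
        (U * diagonal (fun i => (a i : ℂ)) * star U -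
          V * diagonal (fun i => (b i : ℂ)) * star V)).trace.re =
      ∑ i, ∑ j, (a i - b j) ^ 2 * Complex.normSq ((star U * V) i j) := by
  set D := U * diagonal (fun i => (a i : ℂ)) * star U -
    V * diagonal (fun i => (b i : ℂ)) * star V with hD_def
  have hdiag (c : ι → ℝ) : (diagonal fun i => (c i : ℂ)).IsHermitian :=
    isHermitian_diagonal_of_self_adjoint _ (funext fun i => Complex.conj_ofReal (c i))
  have hD : star D = D :=
    ((isHermitian_mul_mul_conjTranspose U (hdiag a)).sub
      (isHermitian_mul_mul_conjTranspose V (hdiag b))).eq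
  calc (D * D).trace.re = (star D * D).trace.re := by rw [hD]
    _ = ∑ i, ∑ j, Complex.normSq ((a i - b j) * (star U * V) i j : ℂ) := by
      rw [hD_def, unitary_conj_diagonal_sub hU hV, trace_star_mul_self_unitary_mul_mul hU hV,
        star_eq_conjTranspose, re_trace_conjTranspose_mul_self]
      rfl
    _ = _ := by simp only [Complex.normSq_mul, ← Complex.ofReal_sub, Complex.normSq_ofReal, sq]

end Matrix

lemma hermFun_id {n : ℕ} {A : Matrix (Fin n) (Fin n) ℂ} (hA : A.IsHermitian) :
    hermFun hA id = A :=
  hA.spectral_theorem.symm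

lemma re_trace_sq_hermFun_sub {n : ℕ} {A B : Matrix (Fin n) (Fin n) ℂ}
    (hA : A.IsHermitian) (hB : B.IsHermitian) (f : ℝ → ℝ) :
    ((hermFun hA f - hermFun hB f) * (hermFun hA f - hermFun hB f)).trace.re
      = ∑ i, ∑ j, (f (hA.eigenvalues i) - f (hB.eigenvalues j)) ^ 2 *
          Complex.normSq ((star (hA.eigenvectorUnitary : Matrix (Fin n) (Fin n) ℂ) *
            (hB.eigenvectorUnitary : Matrix (Fin n) (Fin n) ℂ)) i j) :=
  re_trace_sq_unitary_conj_diagonal_sub hA.eigenvectorUnitary.2 hB.eigenvectorUnitary.2 _ _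

theorem lipschitz_functional_calculus_general {n : ℕ} (f : ℝ → ℝ) (CL : ℝ)
    (hf : ∀ s t : ℝ, |f s - f t| ≤ CL * |s - t|)
    (A B : Matrix (Fin n) (Fin n) ℂ) (hA : A.IsHermitian) (hB : B.IsHermitian) :
    Real.sqrt (((hermFun hA f - hermFun hB f) * (hermFun hA f - hermFun hB f)).trace.re) ≤
      CL * Real.sqrt (((A - B) * (A - B)).trace.re) := by
  have hCL : 0 ≤ CL := by simpa using (abs_nonneg _).trans (hf 1 0)
  have hsq (s t : ℝ) : (f s - f t) ^ 2 ≤ CL ^ 2 * (s - t) ^ 2 := by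
    rw [← sq_abs, ← sq_abs (s - t), ← mul_pow]
    exact pow_le_pow_left₀ (abs_nonneg _) (hf s t) 2
  have hAB := re_trace_sq_hermFun_sub hA hB id
  rw [hermFun_id, hermFun_id] at hAB
  rw [re_trace_sq_hermFun_sub, hAB, ← Real.sqrt_sq hCL, ← Real.sqrt_mul (sq_nonneg CL)]
  refine Real.sqrt_le_sqrt ?_
  simp_rw [Finset.mul_sum, ← mul_assoc]
  gcongr with i _ j _
  · exact Complex.normSq_nonneg _
  · exact hsq _ _

/-- A Lipschitz `f : ℝ → ℝ` extends to a Lipschitz map on Hermitian matrices with the same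
constant, for the Hilbert–Schmidt norm `(Tr M²)^{1/2}`. -/
theorem lipschitz_functional_calculus {n : ℕ} (f : ℝ → ℝ) (CL : ℝ) (hCL : 0 ≤ CL)
    (hf : ∀ s t : ℝ, |f s - f t| ≤ CL * |s - t|)
    (A B : Matrix (Fin n) (Fin n) ℂ) (hA : A.IsHermitian) (hB : B.IsHermitian) :
    Real.sqrt (((hermFun hA f - hermFun hB f) * (hermFun hA f - hermFun hB f)).trace.re) ≤
      CL * Real.sqrt (((A - B) * (A - B)).trace.re) :=
  lipschitz_functional_calculus_general f CL hf A B hA hB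
end
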